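/- arXiv:2205.04370 — 5 statements merged into one kernel-verified Lean document; each statement's English description precedes it below -/
import Mathlib

section
/- The two-dimensional simplex S = {(x1,x2) ∈ ℝ² : x1 ≥ 0, x2 ≥ 0, x1 + x2 ≤ 1} is positively invariant under the flow of the Lotka-Volterra vector field F(x1,x2) = (x1(1 - x1 - 2x2), x2(2x1 + x2 - 1)). -/
open Set

/-- The cyclic Lotka-Volterra vector field F(x₁,x₂) = (x₁(1-x₁-2x₂), x₂(2x₁+x₂-1)). -/
def LV (p : ℝ × ℝ) : ℝ × ℝ := (p.1 * (1 - p.1 - 2 * p.2), p.2 * (2 * p.1 + p.2 - 1))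

/-- The two-dimensional simplex S. -/
def Simplex2 : Set (ℝ × ℝ) := {p | 0 ≤ p.1 ∧ 0 ≤ p.2 ∧ p.1 + p.2 ≤ 1}

/-!
Each of the three barycentric coordinates `x₁`, `x₂`, `x₃ = 1 - x₁ - x₂` satisfies a linear
equation `ẋᵢ = aᵢ(t) xᵢ` with continuous coefficient `aᵢ = x_{i-1} - x_{i+1}`. Such a coordinate
cannot become negative: by the intermediate value theorem it would vanish at some earlier time,
and from then on Grönwall's inequality forces it to stay `0`.
-/

theorem nonneg_of_hasDerivAt_mul_self {y a : ℝ → ℝ} {t₀ T : ℝ}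
    (hy : ∀ t ∈ Icc t₀ T, HasDerivAt y (a t * y t) t) (ha : ContinuousOn a (Icc t₀ T))
    (h₀ : 0 ≤ y t₀) : ∀ t ∈ Icc t₀ T, 0 ≤ y t := by
  intro t ht
  by_contra! hneg
  obtain ⟨M, hM⟩ := isCompact_Icc.exists_bound_of_continuousOn ha
  have hsub : Icc t₀ t ⊆ Icc t₀ T := Icc_subset_Icc_right ht.2
  have hcont : ContinuousOn y (Icc t₀ t) := fun s hs =>
    (hy s (hsub hs)).continuousAt.continuousWithinAt
  obtain ⟨s, hs, hys⟩ := intermediate_value_Icc' ht.1 hcont ⟨hneg.le, h₀⟩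
  have hst : Icc s t ⊆ Icc t₀ T := (Icc_subset_Icc_left hs.1).trans hsub
  have hzero := eq_zero_of_abs_deriv_le_mul_abs_self_of_eq_zero_right (K := M)
    (hcont.mono (Icc_subset_Icc_left hs.1))
    (fun r hr => (hy r (hst (Ico_subset_Icc_self hr))).hasDerivWithinAt) hys
    (fun r hr => by
      rw [norm_mul]
      exact mul_le_mul_of_nonneg_right (hM r (hst (Ico_subset_Icc_self hr))) (norm_nonneg _))
    t ⟨hs.2, le_rfl⟩
  exact hneg.ne hzero

section Prod

variable {E F : Type*} [NormedAddCommGroup E] [NormedSpace ℝ E] [NormedAddCommGroup F]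
  [NormedSpace ℝ F] {f : ℝ → E × F} {f' : E × F} {t : ℝ}

theorem HasDerivAt.fst (h : HasDerivAt f f' t) : HasDerivAt (fun s => (f s).1) f'.1 t :=
  (ContinuousLinearMap.fst ℝ E F).hasFDerivAt.comp_hasDerivAt t h

theorem HasDerivAt.snd (h : HasDerivAt f f' t) : HasDerivAt (fun s => (f s).2) f'.2 t :=
  (ContinuousLinearMap.snd ℝ E F).hasFDerivAt.comp_hasDerivAt t h

end Prod

/-- S is positively invariant under the flow of the Lotka-Volterra field. -/
theorem stmt_4 (X : ℝ → ℝ × ℝ) (Tend : ℝ)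
    (hode : ∀ t ∈ Icc (0:ℝ) Tend, HasDerivAt X (LV (X t)) t)
    (h0 : X 0 ∈ Simplex2) :
    ∀ t ∈ Icc (0:ℝ) Tend, X t ∈ Simplex2 := by
  have hX : ContinuousOn X (Icc 0 Tend) := fun t ht => (hode t ht).continuousAt.continuousWithinAt
  have hx₁ : ∀ t ∈ Icc (0:ℝ) Tend, 0 ≤ (X t).1 :=
    nonneg_of_hasDerivAt_mul_self (a := fun t => 1 - (X t).1 - 2 * (X t).2)
      (fun t ht => by simpa [LV, mul_comm] using (hode t ht).fst) (by fun_prop) h0.1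
  have hx₂ : ∀ t ∈ Icc (0:ℝ) Tend, 0 ≤ (X t).2 :=
    nonneg_of_hasDerivAt_mul_self (a := fun t => 2 * (X t).1 + (X t).2 - 1)
      (fun t ht => by simpa [LV, mul_comm] using (hode t ht).snd) (by fun_prop) h0.2.1
  have hx₃ : ∀ t ∈ Icc (0:ℝ) Tend, 0 ≤ 1 - (X t).1 - (X t).2 :=
    nonneg_of_hasDerivAt_mul_self (a := fun t => (X t).2 - (X t).1)
      (fun t ht => (((hasDerivAt_const t 1).sub (hode t ht).fst).sub (hode t ht).snd).congr_deriv
        (by simp only [LV]; ring))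
      (by fun_prop) (by linarith [h0.2.2])
  exact fun t ht => ⟨hx₁ t ht, hx₂ t ht, by linarith [hx₃ t ht]⟩
end

section
/- For z ∈ (0,1/27), the period of the closed orbit of F on the level set {x1 x2 x3 = z} equals T(z) = 2∫_{x^min(z)}^{x^max(z)} dx/√(x²(1-x)² - 4zx), and this integral satisfies the bounds (2/√(χ̄(z)))·π ≤ T(z) ≤ (2/√(χ_(z)))·π, where χ_(z) = min and χ̄(z) = max over x ∈ (x^min(z), x^max(z)) of (x^add(z) - x)·x. -/
/-!
Write `u, v, w` for the coordinates `x₁, x₂, x₃ = 1 - u - v`, so that `u' = u (w - v)`. On the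
level set `u v w = z` one has `(1 - u - 2v)² = (1 - u)² - 4vw`, hence
`u'² = u²(1 - u)² - 4zu = u (u - xᵐⁱⁿ)(u - xᵐᵃˣ)(u - xᵃᵈᵈ)`.

Exchanging `x₂` and `x₃` and reversing time maps solutions to solutions, and it fixes the state
exactly when `u' = 0`. By uniqueness the orbit is therefore symmetric about every time `a` with
`u'(a) = 0`, and two such times `a < b` make `2 (b - a)` a period. With `τ` a minimum time of `u`
and `σ` the next maximum time, this forces `P = 2 (σ - τ)` and `u' > 0` on `(τ, σ)`, where `u`
climbs from `xᵐⁱⁿ` to `xᵐᵃˣ`. Separating variables gives `σ - τ = ∫ dx / √(x²(1 - x)² - 4zx)`.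

For the bounds, the quartic is `(x - xᵐⁱⁿ)(xᵐᵃˣ - x) χ(x)` with `χ(x) = (xᵃᵈᵈ - x) x`, and
`∫ₐᵇ dx / √((x - a)(b - x)) = π` by the substitution `x = (a + b)/2 - (b - a)/2 · cos θ`.
-/

open Set

open MeasureTheory Real

theorem IsPreconnected.pos_or_neg_of_ne_zero {α : Type*} [TopologicalSpace α] {s : Set α}
    (hs : IsPreconnected s) {f : α → ℝ} (hf : ContinuousOn f s) (h0 : ∀ t ∈ s, f t ≠ 0) :
    (∀ t ∈ s, 0 < f t) ∨ (∀ t ∈ s, f t < 0) := by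
  by_contra! ⟨⟨a, ha, hfa⟩, ⟨b, hb, hfb⟩⟩
  obtain ⟨c, hc, hfc⟩ := hs.intermediate_value ha hb hf ⟨hfa, hfb⟩
  exact h0 c hc hfc

theorem pos_of_mul_pos_of_exists_eq {α : Type*} [TopologicalSpace α] [PreconnectedSpace α]
    {f g h : α → ℝ} (hf : Continuous f) (hg : Continuous g) (hh : Continuous h)
    (hfgh : ∀ t, 0 < f t * g t * h t)
    (hfg : ∃ t, f t = g t) (hgh : ∃ t, g t = h t) (hhf : ∃ t, h t = f t) :
    ∀ t, 0 < f t ∧ 0 < g t ∧ 0 < h t := by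
  have hsign {k : α → ℝ} (hk : Continuous k) (hk0 : ∀ t, k t ≠ 0) :
      (∀ t, 0 < k t) ∨ (∀ t, k t < 0) := by
    simpa using isPreconnected_univ.pos_or_neg_of_ne_zero hk.continuousOn fun t _ => hk0 t
  have hf0 t : f t ≠ 0 := fun h0 => by simpa [h0] using hfgh t
  have hg0 t : g t ≠ 0 := fun h0 => by simpa [h0] using hfgh t
  have hh0 t : h t ≠ 0 := fun h0 => by simpa [h0] using hfgh t
  obtain ⟨t₁, h₁⟩ := hfg
  obtain ⟨t₂, h₂⟩ := hgh
  obtain ⟨t₃, h₃⟩ := hhf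
  rcases hsign hf hf0 with hf | hf <;> rcases hsign hg hg0 with hg | hg <;>
    rcases hsign hh hh0 with hh | hh
  · exact fun t => ⟨hf t, hg t, hh t⟩
  all_goals exfalso
  all_goals first
    | linarith [hf t₁, hg t₁] | linarith [hg t₂, hh t₂] | linarith [hh t₃, hf t₃]
    | nlinarith [hfgh t₁, hf t₁, hg t₁, hh t₁, mul_pos_of_neg_of_neg (hf t₁) (hg t₁)]

theorem Function.Periodic.exists_hasDerivAt_eq_zero {f f' : ℝ → ℝ} {P : ℝ}
    (hf : Function.Periodic f P) (hP : 0 < P) (hderiv : ∀ t, HasDerivAt f (f' t) t) :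
    ∃ t, f' t = 0 := by
  obtain ⟨t, -, ht⟩ := _root_.exists_hasDerivAt_eq_zero hP
    (HasDerivAt.continuousOn fun t _ => hderiv t) (by simpa using (hf 0).symm)
    fun t _ => hderiv t
  exact ⟨t, ht⟩

theorem integral_one_div_sqrt_eq_sub {φ φ' h : ℝ → ℝ} {a b : ℝ} (hab : a < b)
    (hφ : ContinuousOn φ (Icc a b)) (hderiv : ∀ t ∈ Ioo a b, HasDerivAt φ (φ' t) t)
    (hpos : ∀ t ∈ Ioo a b, 0 < φ' t) (hsq : ∀ t ∈ Ioo a b, φ' t ^ 2 = h (φ t)) :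
    IntervalIntegrable (fun x => 1 / √(h x)) volume (φ a) (φ b) ∧
      ∫ x in φ a..φ b, 1 / √(h x) = b - a := by
  have hmono : StrictMonoOn φ (Icc a b) :=
    strictMonoOn_of_deriv_pos (convex_Icc a b) hφ fun t ht => by
      rw [interior_Icc] at ht
      rw [(hderiv t ht).deriv]
      exact hpos t ht
  have ha : a ∈ Icc a b := left_mem_Icc.2 hab.le
  have hb : b ∈ Icc a b := right_mem_Icc.2 hab.le
  have hmaps : MapsTo φ (Ioo a b) (Ioo (φ a) (φ b)) := fun t ht =>
    ⟨hmono ha (Ioo_subset_Icc_self ht) ht.1, hmono (Ioo_subset_Icc_self ht) hb ht.2⟩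
  have himage : φ '' Ioo a b = Ioo (φ a) (φ b) :=
    hmaps.image_subset.antisymm (intermediate_value_Ioo hab.le hφ)
  have hinj : InjOn φ (Ioo a b) := hmono.injOn.mono Ioo_subset_Icc_self
  have hderiv' : ∀ t ∈ Ioo a b, HasDerivWithinAt φ (φ' t) (Ioo a b) t :=
    fun t ht => (hderiv t ht).hasDerivWithinAt
  -- the change of variables `x = φ t` turns the integrand into `1`
  have hone : EqOn (fun t => |φ' t| • (1 / √(h (φ t)))) 1 (Ioo a b) := fun t ht => by
    show |φ' t| • (1 / √(h (φ t))) = 1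
    rw [← hsq t ht, sqrt_sq (hpos t ht).le, abs_of_pos (hpos t ht), smul_eq_mul,
      mul_one_div_cancel (hpos t ht).ne']
  have hφab : φ a ≤ φ b := (hmono ha hb hab).le
  constructor
  · rw [intervalIntegrable_iff_integrableOn_Ioo_of_le hφab, ← himage,
      integrableOn_image_iff_integrableOn_abs_deriv_smul measurableSet_Ioo hderiv' hinj,
      integrableOn_congr_fun hone measurableSet_Ioo]
    exact integrableOn_const measure_Ioo_lt_top.ne
  · rw [intervalIntegral.integral_of_le hφab, integral_Ioc_eq_integral_Ioo, ← himage,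
      integral_image_eq_integral_abs_deriv_smul measurableSet_Ioo hderiv' hinj,
      setIntegral_congr_fun measurableSet_Ioo hone]
    simp [hab.le]

theorem integral_one_div_sqrt_sub_mul_sub {a b : ℝ} (hab : a < b) :
    IntervalIntegrable (fun x => 1 / √((x - a) * (b - x))) volume a b ∧
      ∫ x in a..b, 1 / √((x - a) * (b - x)) = π := by
  have key := integral_one_div_sqrt_eq_sub (φ := fun θ => (a + b) / 2 - (b - a) / 2 * cos θ)
    (φ' := fun θ => (b - a) / 2 * sin θ) (h := fun x => (x - a) * (b - x)) pi_pos
    (by fun_prop)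
    (fun θ _ => ((hasDerivAt_cos θ).const_mul _).const_sub _ |>.congr_deriv (by ring))
    (fun θ hθ => mul_pos (by linarith) (sin_pos_of_mem_Ioo hθ))
    (fun θ _ => by linear_combination ((b - a) ^ 2 / 4) * sin_sq_add_cos_sq θ)
  convert key using 3 <;> simp <;> ring

theorem integral_one_div_sqrt_sub_mul_sub_mul_mem_Icc {a b m M : ℝ} {χ : ℝ → ℝ} (hab : a < b)
    (hm : 0 < m) (hχ : MapsTo χ (Ioo a b) (Icc m M))
    (hint : IntervalIntegrable (fun x => 1 / √((x - a) * (b - x) * χ x)) volume a b) :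
    ∫ x in a..b, 1 / √((x - a) * (b - x) * χ x) ∈ Icc (π / √M) (π / √m) := by
  obtain ⟨hint₀, hπ⟩ := integral_one_div_sqrt_sub_mul_sub hab
  have hsplit : ∀ x ∈ Ioo a b, ∀ c, 1 / √((x - a) * (b - x) * c)
      = (√c)⁻¹ * (1 / √((x - a) * (b - x))) := fun x hx c => by
    rw [sqrt_mul (mul_pos (sub_pos.2 hx.1) (sub_pos.2 hx.2)).le]
    field_simp
  have hle : ∀ x ∈ Ioo a b, ∀ {c d}, 0 < c → c ≤ d →
      1 / √((x - a) * (b - x) * d) ≤ 1 / √((x - a) * (b - x) * c) := fun x hx c d hc hcd => by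
    have : 0 < (x - a) * (b - x) := mul_pos (sub_pos.2 hx.1) (sub_pos.2 hx.2)
    gcongr
  constructor
  · have h := intervalIntegral.integral_mono_on_of_le_Ioo hab.le (hint₀.const_mul (√M)⁻¹) hint
      fun x hx => hsplit x hx M ▸ hle x hx (hm.trans_le (hχ hx).1) (hχ hx).2
    rwa [intervalIntegral.integral_const_mul, hπ, inv_mul_eq_div] at h
  · have h := intervalIntegral.integral_mono_on_of_le_Ioo hab.le hint (hint₀.const_mul (√m)⁻¹)
      fun x hx => hsplit x hx m ▸ hle x hx hm (hχ hx).1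
    rwa [intervalIntegral.integral_const_mul, hπ, inv_mul_eq_div] at h

theorem cubic_eq_mul_of_roots {z a b c : ℝ} (hab : a ≠ b) (hbc : b ≠ c) (hac : a ≠ c)
    (ha : a * (1 - a) ^ 2 = 4 * z) (hb : b * (1 - b) ^ 2 = 4 * z)
    (hc : c * (1 - c) ^ 2 = 4 * z) (x : ℝ) :
    x * (1 - x) ^ 2 - 4 * z = (x - a) * (x - b) * (x - c) := by
  have hab' : a ^ 2 + a * b + b ^ 2 - 2 * (a + b) + 1 = 0 :=
    (mul_eq_zero.1 (by linear_combination ha - hb : (a - b) * _ = 0)).resolve_left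
      (sub_ne_zero.2 hab)
  have hbc' : b ^ 2 + b * c + c ^ 2 - 2 * (b + c) + 1 = 0 :=
    (mul_eq_zero.1 (by linear_combination hb - hc : (b - c) * _ = 0)).resolve_left
      (sub_ne_zero.2 hbc)
  have hsum : a + b + c - 2 = 0 :=
    (mul_eq_zero.1 (by linear_combination hab' - hbc' : (a - c) * _ = 0)).resolve_left
      (sub_ne_zero.2 hac)
  linear_combination (x ^ 2 - (x - a) * (a + b) - a ^ 2) * hsum + (x - a) * hab' + ha

theorem one_lt_and_quartic_eq_of_roots {z a b c : ℝ} (hz : 0 < z) (ha : a ∈ Ioo 0 1)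
    (hb : b ∈ Ioo 0 1) (hab : a < b) (hbc : b < c) (hra : a * (1 - a) ^ 2 = 4 * z)
    (hrb : b * (1 - b) ^ 2 = 4 * z) (hrc : c * (1 - c) ^ 2 = 4 * z) :
    1 < c ∧ ∀ x, x ^ 2 * (1 - x) ^ 2 - 4 * z * x = (x - a) * (b - x) * ((c - x) * x) := by
  have hcubic := cubic_eq_mul_of_roots hab.ne hbc.ne (hab.trans hbc).ne hra hrb hrc
  refine ⟨by nlinarith [hcubic 1, mul_pos (sub_pos.2 ha.2) (sub_pos.2 hb.2)], fun x => ?_⟩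
  linear_combination x * hcubic x

theorem eq_or_eq_of_quartic_eq_zero {a b c y : ℝ} (hc : 1 < c) (hy : y ∈ Ioo 0 1)
    (h : (y - a) * (b - y) * ((c - y) * y) = 0) : y = a ∨ y = b := by
  have hχ : (c - y) * y ≠ 0 := (mul_pos (by linarith [hy.2]) hy.1).ne'
  rcases mul_eq_zero.1 ((mul_eq_zero.1 h).resolve_right hχ) with h | h
  · left; linarith
  · right; linarith

theorem mapsTo_sub_mul_self_Ioo {a b c : ℝ} (ha : 0 < a) (hbc : b < c) :
    MapsTo (fun x => (c - x) * x) (Ioo a b) (Icc ((c - b) * a) (c * b)) := fun x hx =>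
  ⟨mul_le_mul (by linarith [hx.2]) hx.1.le ha.le (by linarith [hx.2]),
    mul_le_mul (by linarith [hx.1]) hx.2.le (by linarith [hx.1]) (by linarith [hx.1, hx.2])⟩

theorem sInf_image_pos_and_mapsTo_Icc {α : Type*} {f : α → ℝ} {s : Set α} {m M : ℝ}
    (hs : s.Nonempty) (hm : 0 < m) (hf : MapsTo f s (Icc m M)) :
    0 < sInf (f '' s) ∧ MapsTo f s (Icc (sInf (f '' s)) (sSup (f '' s))) := by
  have hbelow : m ∈ lowerBounds (f '' s) := forall_mem_image.2 fun x hx => (hf hx).1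
  have habove : M ∈ upperBounds (f '' s) := forall_mem_image.2 fun x hx => (hf hx).2
  exact ⟨hm.trans_le (le_csInf (hs.image f) hbelow), fun x hx =>
    ⟨csInf_le ⟨m, hbelow⟩ (mem_image_of_mem f hx), le_csSup ⟨M, habove⟩ (mem_image_of_mem f hx)⟩⟩

def openSimplex : Set (ℝ × ℝ) := {p | 0 < p.1 ∧ 0 < p.2 ∧ 0 < 1 - p.1 - p.2}

-- exchanges `x₂` and `x₃ = 1 - x₁ - x₂`
def swap₂₃ (p : ℝ × ℝ) : ℝ × ℝ := (p.1, 1 - p.1 - p.2)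

theorem swap₂₃_swap₂₃ (p : ℝ × ℝ) : swap₂₃ (swap₂₃ p) = p := by
  simp [swap₂₃]

theorem swap₂₃_mem_openSimplex {p : ℝ × ℝ} (hp : p ∈ openSimplex) : swap₂₃ p ∈ openSimplex := by
  obtain ⟨h1, h2, h3⟩ := hp
  exact ⟨h1, h3, by simpa [swap₂₃] using h2⟩

-- `LV ∘ swap₂₃ = -(D swap₂₃) ∘ LV`: the swap conjugates the flow to its time reversal
theorem LV_swap₂₃ (p : ℝ × ℝ) : LV (swap₂₃ p) = (-(LV p).1, (LV p).1 + (LV p).2) := by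
  simp only [LV, swap₂₃, Prod.mk.injEq]
  constructor <;> ring

theorem swap₂₃_eq_self_of_LV_fst_eq_zero {p : ℝ × ℝ} (hp : p.1 ≠ 0) (h : (LV p).1 = 0) :
    swap₂₃ p = p := by
  have : 1 - p.1 - 2 * p.2 = 0 := (mul_eq_zero.1 h).resolve_left hp
  exact Prod.ext rfl (by simp only [swap₂₃]; linarith)

theorem LV_fst_sq {p : ℝ × ℝ} {z : ℝ} (hp : p.1 * p.2 * (1 - p.1 - p.2) = z) :
    (LV p).1 ^ 2 = p.1 ^ 2 * (1 - p.1) ^ 2 - 4 * z * p.1 := by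
  simp only [LV]
  linear_combination (-4 * p.1) * hp

theorem openSimplex_subset_closedBall : openSimplex ⊆ Metric.closedBall 0 1 := by
  rintro p ⟨h1, h2, h3⟩
  rw [mem_closedBall_zero_iff, Prod.norm_def, Real.norm_eq_abs, Real.norm_eq_abs]
  exact max_le (abs_le.2 ⟨by linarith, by linarith⟩) (abs_le.2 ⟨by linarith, by linarith⟩)

theorem exists_lipschitzOnWith_LV : ∃ K, LipschitzOnWith K LV openSimplex := by
  have hLV : ContDiff ℝ 1 LV := by unfold LV; fun_prop
  obtain ⟨K, hK⟩ := hLV.locallyLipschitz.locallyLipschitzOn.exists_lipschitzOnWith_of_compact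
    (isCompact_closedBall (0 : ℝ × ℝ) 1)
  exact ⟨K, hK.mono openSimplex_subset_closedBall⟩

section Orbit

variable {X : ℝ → ℝ × ℝ}

theorem LV_hasDerivAt_fst (hode : ∀ t, HasDerivAt X (LV (X t)) t) (t : ℝ) :
    HasDerivAt (fun s => (X s).1) (LV (X t)).1 t := by
  simpa using (hode t).hasFDerivAt.fst.hasDerivAt

theorem LV_hasDerivAt_snd (hode : ∀ t, HasDerivAt X (LV (X t)) t) (t : ℝ) :
    HasDerivAt (fun s => (X s).2) (LV (X t)).2 t := by
  simpa using (hode t).hasFDerivAt.snd.hasDerivAt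

theorem LV_mem_openSimplex {z P : ℝ} (hode : ∀ t, HasDerivAt X (LV (X t)) t)
    (hlevel : ∀ t, (X t).1 * (X t).2 * (1 - (X t).1 - (X t).2) = z) (hz : 0 < z)
    (hper : Function.Periodic X P) (hP : 0 < P) (t : ℝ) : X t ∈ openSimplex := by
  have hX : Continuous X := continuous_iff_continuousAt.2 fun t => (hode t).continuousAt
  have hlevel' t : 0 < (X t).1 * (X t).2 * (1 - (X t).1 - (X t).2) := hlevel t ▸ hz
  have hne t : (X t).1 ≠ 0 ∧ (X t).2 ≠ 0 ∧ 1 - (X t).1 - (X t).2 ≠ 0 := by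
    simpa [not_or, and_assoc] using (hlevel' t).ne'
  -- each coordinate is stationary somewhere along a closed orbit, which forces two coordinates
  -- to meet there
  obtain ⟨t₁, ht₁⟩ := (hper.comp Prod.fst).exists_hasDerivAt_eq_zero hP (LV_hasDerivAt_fst hode)
  obtain ⟨t₂, ht₂⟩ := (hper.comp Prod.snd).exists_hasDerivAt_eq_zero hP (LV_hasDerivAt_snd hode)
  obtain ⟨t₃, ht₃⟩ := (hper.comp fun p => 1 - p.1 - p.2).exists_hasDerivAt_eq_zero hP
    fun t => ((LV_hasDerivAt_fst hode t).const_sub 1).sub (LV_hasDerivAt_snd hode t)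
  simp only [LV] at ht₁ ht₂ ht₃
  exact pos_of_mul_pos_of_exists_eq (by fun_prop) (by fun_prop) (by fun_prop) hlevel'
    ⟨t₃, by
      have : (1 - (X t₃).1 - (X t₃).2) * ((X t₃).1 - (X t₃).2) = 0 := by linear_combination -ht₃
      linarith [(mul_eq_zero.1 this).resolve_left (hne t₃).2.2]⟩
    ⟨t₁, by linarith [(mul_eq_zero.1 ht₁).resolve_left (hne t₁).1]⟩
    ⟨t₂, by linarith [(mul_eq_zero.1 ht₂).resolve_left (hne t₂).2.1]⟩ t

theorem LV_solution_unique {Y : ℝ → ℝ × ℝ} (hX : ∀ t, HasDerivAt X (LV (X t)) t)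
    (hY : ∀ t, HasDerivAt Y (LV (Y t)) t) (hXS : ∀ t, X t ∈ openSimplex)
    (hYS : ∀ t, Y t ∈ openSimplex) {t₀ : ℝ} (h : X t₀ = Y t₀) : X = Y := by
  obtain ⟨K, hK⟩ := exists_lipschitzOnWith_LV
  exact ODE_solution_unique_univ (v := fun _ => LV) (s := fun _ => openSimplex) (fun _ => hK)
    (fun t => ⟨hX t, hXS t⟩) (fun t => ⟨hY t, hYS t⟩) h

theorem swap₂₃_comp_eq_of_swap₂₃_eq_self (hode : ∀ t, HasDerivAt X (LV (X t)) t)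
    (hS : ∀ t, X t ∈ openSimplex) {a : ℝ} (ha : swap₂₃ (X a) = X a) (t : ℝ) :
    swap₂₃ (X (2 * a - t)) = X t := by
  have hrev t : HasDerivAt (fun s => swap₂₃ (X (2 * a - s))) (LV (swap₂₃ (X (2 * a - t)))) t := by
    have h1 := (LV_hasDerivAt_fst hode (2 * a - t)).comp t ((hasDerivAt_id t).const_sub (2 * a))
    have h2 := (LV_hasDerivAt_snd hode (2 * a - t)).comp t ((hasDerivAt_id t).const_sub (2 * a))
    rw [LV_swap₂₃]
    convert h1.prodMk ((h1.const_sub 1).sub h2) using 1 <;> simp [swap₂₃, Function.comp_def]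
  refine congrFun (LV_solution_unique hrev hode (fun t => swap₂₃_mem_openSimplex (hS _)) hS
    (t₀ := a) ?_) t
  simpa [two_mul] using ha

theorem periodic_of_swap₂₃_eq_self (hode : ∀ t, HasDerivAt X (LV (X t)) t)
    (hS : ∀ t, X t ∈ openSimplex) {a b : ℝ} (ha : swap₂₃ (X a) = X a)
    (hb : swap₂₃ (X b) = X b) : Function.Periodic X (2 * (b - a)) := fun s =>
  calc X (s + 2 * (b - a)) = swap₂₃ (swap₂₃ (X (2 * b - (2 * a - s)))) := by
        rw [swap₂₃_swap₂₃]; ring_nf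
    _ = X s := by
      rw [swap₂₃_comp_eq_of_swap₂₃_eq_self hode hS hb, swap₂₃_comp_eq_of_swap₂₃_eq_self hode hS ha]

theorem LV_exists_half_period {P : ℝ} (hode : ∀ t, HasDerivAt X (LV (X t)) t)
    (hS : ∀ t, X t ∈ openSimplex) (hper : Function.Periodic X P) (hP : 0 < P)
    (hmin : ∀ q, 0 < q → Function.Periodic X q → P ≤ q) :
    ∃ τ σ, τ < σ ∧ P = 2 * (σ - τ) ∧ (LV (X τ)).1 = 0 ∧ (LV (X σ)).1 = 0 ∧
      (X τ).1 < (X σ).1 ∧ ∀ t ∈ Ioo τ σ, 0 < (LV (X t)).1 := by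
  set u : ℝ → ℝ := fun t => (X t).1
  have hu : Function.Periodic u P := hper.comp Prod.fst
  have hcont : Continuous u :=
    continuous_iff_continuousAt.2 fun t => (LV_hasDerivAt_fst hode t).continuousAt
  have hK := hu.compact_of_continuous hP.ne' hcont
  obtain ⟨_, ⟨τ, rfl⟩, hτ⟩ := hK.exists_isLeast (range_nonempty u)
  obtain ⟨_, ⟨σ₀, rfl⟩, hσ₀⟩ := hK.exists_isGreatest (range_nonempty u)
  -- a time-reversal symmetry at `a` and at `b` makes `2 (b - a)` a period
  have hgap {a b : ℝ} (hab : a < b) (ha : (LV (X a)).1 = 0) (hb : (LV (X b)).1 = 0) :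
      P ≤ 2 * (b - a) :=
    hmin _ (by linarith) (periodic_of_swap₂₃_eq_self hode hS
      (swap₂₃_eq_self_of_LV_fst_eq_zero (hS a).1.ne' ha)
      (swap₂₃_eq_self_of_LV_fst_eq_zero (hS b).1.ne' hb))
  have hτ0 : (LV (X τ)).1 = 0 :=
    IsLocalMin.hasDerivAt_eq_zero (.of_forall fun t => hτ ⟨t, rfl⟩) (LV_hasDerivAt_fst hode τ)
  have hlt : u τ < u σ₀ := by
    refine (hτ ⟨σ₀, rfl⟩).lt_of_ne fun heq => ?_
    have hconst (t : ℝ) : (LV (X t)).1 = 0 :=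
      IsLocalMin.hasDerivAt_eq_zero (.of_forall fun s => (hσ₀ ⟨t, rfl⟩).trans (heq ▸ hτ ⟨s, rfl⟩))
        (LV_hasDerivAt_fst hode t)
    linarith [hgap (by linarith : 0 < P / 4) (hconst 0) (hconst _)]
  obtain ⟨σ, hσ, hσu⟩ := hu.exists_mem_Ico hP σ₀ τ
  have hτσ : τ < σ := hσ.1.lt_of_ne (by rintro rfl; exact hlt.ne' hσu)
  have hσ0 : (LV (X σ)).1 = 0 :=
    IsLocalMax.hasDerivAt_eq_zero (.of_forall fun t => (hσ₀ ⟨t, rfl⟩).trans_eq hσu)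
      (LV_hasDerivAt_fst hode σ)
  have hτP : (LV (X (τ + P))).1 = 0 := by rw [hper τ]; exact hτ0
  have hPσ : P = 2 * (σ - τ) :=
    le_antisymm (hgap hτσ hτ0 hσ0) (by linarith [hgap hσ.2 hσ0 hτP])
  refine ⟨τ, σ, hτσ, hPσ, hτ0, hσ0, hlt.trans_eq hσu, ?_⟩
  have hne : ∀ t ∈ Ioo τ σ, (LV (X t)).1 ≠ 0 := fun t ht h0 => by
    linarith [hgap ht.1 hτ0 h0, ht.2]
  refine (hasDerivWithinAt_forall_lt_or_forall_gt_of_forall_ne (convex_Ioo τ σ)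
    (fun t _ => (LV_hasDerivAt_fst hode t).hasDerivWithinAt) hne).resolve_left fun hneg => ?_
  have hanti : StrictAntiOn u (Icc τ σ) :=
    strictAntiOn_of_deriv_neg (convex_Icc τ σ) hcont.continuousOn fun t ht => by
      rw [interior_Icc] at ht
      rw [(LV_hasDerivAt_fst hode t).deriv]
      exact hneg t ht
  exact (hanti (left_mem_Icc.2 hτσ.le) (right_mem_Icc.2 hτσ.le) hτσ).not_ge (hτ ⟨σ, rfl⟩)

end Orbit

/-- the (minimal) period of the closed orbit on the level set
{x₁x₂x₃ = z} equals T(z) = 2∫_{xmin}^{xmax} dx/√(x²(1-x)² - 4zx), and this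
quantity is bounded between (2/√χ̄)π and (2/√χ̲)π, with χ̲, χ̄ the min and max
of x ↦ (x^add - x)x over (xmin, xmax). -/
theorem stmt_9 (z : ℝ) (hz : z ∈ Ioo (0:ℝ) (1 / 27))
    (xmin xmax xadd : ℝ) (h1 : xmin ∈ Ioo (0:ℝ) 1) (h2 : xmax ∈ Ioo (0:ℝ) 1)
    (hlt : xmin < xmax) (hlt2 : xmax < xadd)
    (hr1 : xmin * (1 - xmin) ^ 2 = 4 * z) (hr2 : xmax * (1 - xmax) ^ 2 = 4 * z)
    (hr3 : xadd * (1 - xadd) ^ 2 = 4 * z)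
    (X : ℝ → ℝ × ℝ) (hode : ∀ t, HasDerivAt X (LV (X t)) t)
    (hlevel : ∀ t, (X t).1 * (X t).2 * (1 - (X t).1 - (X t).2) = z)
    (P : ℝ) (hP : 0 < P) (hper : ∀ t, X (t + P) = X t)
    (hminper : ∀ q, 0 < q → (∀ t, X (t + q) = X t) → P ≤ q) :
    P = 2 * ∫ x in xmin..xmax, 1 / Real.sqrt (x ^ 2 * (1 - x) ^ 2 - 4 * z * x) ∧
    2 / Real.sqrt (sSup ((fun x => (xadd - x) * x) '' Ioo xmin xmax)) * Real.pi ≤ P ∧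
    P ≤ 2 / Real.sqrt (sInf ((fun x => (xadd - x) * x) '' Ioo xmin xmax)) * Real.pi := by
  obtain ⟨hxadd, hfac⟩ := one_lt_and_quartic_eq_of_roots hz.1 h1 h2 hlt hlt2 hr1 hr2 hr3
  have hS := LV_mem_openSimplex hode hlevel hz.1 hper hP
  obtain ⟨τ, σ, hτσ, hPσ, hτ0, hσ0, hτσu, hpos⟩ := LV_exists_half_period hode hS hper hP hminper
  have henergy (t : ℝ) := LV_fst_sq (hlevel t)
  have hturn {t : ℝ} (ht : (LV (X t)).1 = 0) : (X t).1 = xmin ∨ (X t).1 = xmax := by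
    obtain ⟨hu, hv, hw⟩ := hS t
    refine eq_or_eq_of_quartic_eq_zero hxadd ⟨hu, by linarith⟩ ?_
    rw [← hfac, ← henergy, ht, zero_pow two_ne_zero]
  have hends : (X τ).1 = xmin ∧ (X σ).1 = xmax := by
    rcases hturn hτ0 with h | h <;> rcases hturn hσ0 with h' | h' <;>
      first | exact ⟨h, h'⟩ | (rw [h, h'] at hτσu; linarith)
  obtain ⟨hint, hI⟩ := integral_one_div_sqrt_eq_sub
    (h := fun x => x ^ 2 * (1 - x) ^ 2 - 4 * z * x) hτσ
    (HasDerivAt.continuousOn fun t _ => LV_hasDerivAt_fst hode t)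
    (fun t _ => LV_hasDerivAt_fst hode t) hpos (fun t _ => henergy t)
  simp only [hends.1, hends.2, hfac] at hint hI
  obtain ⟨hχ0, hχ⟩ := sInf_image_pos_and_mapsTo_Icc (nonempty_Ioo.2 hlt)
    (mul_pos (sub_pos.2 hlt2) h1.1) (mapsTo_sub_mul_self_Ioo h1.1 hlt2)
  obtain ⟨hlow, hup⟩ := integral_one_div_sqrt_sub_mul_sub_mul_mem_Icc hlt hχ0 hχ hint
  simp only [hfac, hI] at hlow hup ⊢
  refine ⟨hPσ, ?_, ?_⟩ <;> rw [hPσ, div_mul_eq_mul_div, mul_div_assoc] <;> linarith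
end

section
/- For any z ∈ (0,1/27) and the T(z)-periodic orbit X(t) on the level set x1 x2 x3 = z of the cyclic Lotka-Volterra flow, the time averages ⟨x_i x_{i+1}²⟩_z and ⟨x_i x_{i-1}²⟩_z are all equal, independently of i ∈ ℤ/3ℤ; in particular ⟨x_i x_{i+1}²⟩_z = ⟨x_i x_{i-1}²⟩_z = ⟨x_{i+1} x_{i-1}²⟩_z. -/
/-!
Along a closed orbit the time average of a time derivative vanishes. Applied to `x_i`, whose
derivative is `x_i (x_{i-1} - x_{i+1})`, this makes `⟨x_i x_{i+1}⟩` independent of `i`; applied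
to `x_i x_{i+1}`, whose derivative is `x_i² x_{i+1} - x_i x_{i+1}²`, it gives
`⟨x_{i+1} x_i²⟩ = ⟨x_i x_{i+1}²⟩`. Substituting `x_{i-1} = 1 - x_i - x_{i+1}` in
`x_{i-1} x_i x_{i+1} = z` gives `2 ⟨x_i x_{i+1}²⟩ = ⟨x_i x_{i+1}⟩ - z`, so this average does not
depend on `i` either.
-/

open Set

/-- Coordinate functions x₀ = x₁, x₁ = x₂, x₂ = x₃ = 1-x₁-x₂, indexed by ℤ/3ℤ. -/
def coordFn (i : ZMod 3) (p : ℝ × ℝ) : ℝ :=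
  if i = 0 then p.1 else if i = 1 then p.2 else 1 - p.1 - p.2

/-- Time average ⟨x_i x_j²⟩ over a T-periodic orbit X. -/
noncomputable def avgPair (X : ℝ → ℝ × ℝ) (T : ℝ) (i j : ZMod 3) : ℝ :=
  (1 / T) * ∫ t in (0:ℝ)..T, coordFn i (X t) * coordFn j (X t) ^ 2

theorem ZMod.eq_zero_or_eq_one_or_eq_two (i : ZMod 3) : i = 0 ∨ i = 1 ∨ i = 2 := by
  decide +revert

theorem ZMod.add_one_add_one_eq_sub_one (i : ZMod 3) : i + 1 + 1 = i - 1 := by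
  decide +revert

theorem ZMod.apply_eq_of_forall_apply_add_one {n : ℕ} [NeZero n] {α : Type*} {f : ZMod n → α}
    (h : ∀ i, f (i + 1) = f i) (i j : ZMod n) : f i = f j := by
  have h_add : ∀ k : ℕ, f (i + k) = f i := by
    intro k
    induction k with
    | zero => simp
    | succ k ih => rw [Nat.cast_succ, ← add_assoc, h, ih]
  rw [← h_add (j - i).val, ZMod.natCast_zmod_val, add_sub_cancel]

theorem intervalIntegral.integral_eq_of_hasDerivAt_sub {G f g : ℝ → ℝ} {T : ℝ}
    (hG : ∀ t, HasDerivAt G (f t - g t) t) (hf : Continuous f) (hg : Continuous g)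
    (hT : G T = G 0) : ∫ t in (0:ℝ)..T, f t = ∫ t in (0:ℝ)..T, g t := by
  rw [← sub_eq_zero, ← integral_sub (hf.intervalIntegrable _ _) (hg.intervalIntegrable _ _),
    integral_eq_sub_of_hasDerivAt (fun t _ => hG t) ((hf.sub hg).intervalIntegrable _ _), hT,
    sub_self]

@[simp] theorem coordFn_zero (p : ℝ × ℝ) : coordFn 0 p = p.1 := rfl

@[simp] theorem coordFn_one (p : ℝ × ℝ) : coordFn 1 p = p.2 := rfl

@[simp] theorem coordFn_two (p : ℝ × ℝ) : coordFn 2 p = 1 - p.1 - p.2 := rfl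

theorem coordFn_mul_mul (i : ZMod 3) (p : ℝ × ℝ) :
    coordFn i p * coordFn (i + 1) p * coordFn (i - 1) p = p.1 * p.2 * (1 - p.1 - p.2) := by
  rcases ZMod.eq_zero_or_eq_one_or_eq_two i with rfl | rfl | rfl <;> reduce_mod_char <;>
    simp only [coordFn_zero, coordFn_one, coordFn_two] <;> ring

theorem coordFn_sub_one (i : ZMod 3) (p : ℝ × ℝ) :
    coordFn (i - 1) p = 1 - coordFn i p - coordFn (i + 1) p := by
  rcases ZMod.eq_zero_or_eq_one_or_eq_two i with rfl | rfl | rfl <;> reduce_mod_char <;>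
    simp only [coordFn_zero, coordFn_one, coordFn_two] <;> ring

section Orbit

variable {X : ℝ → ℝ × ℝ} (hode : ∀ t, HasDerivAt X (LV (X t)) t)
include hode

theorem hasDerivAt_coordFn (i : ZMod 3) (t : ℝ) :
    HasDerivAt (fun t => coordFn i (X t))
      (coordFn i (X t) * (coordFn (i - 1) (X t) - coordFn (i + 1) (X t))) t := by
  have h1 : HasDerivAt (fun t => (X t).1) (LV (X t)).1 t := (hode t).fst
  have h2 : HasDerivAt (fun t => (X t).2) (LV (X t)).2 t := (hode t).snd
  rcases ZMod.eq_zero_or_eq_one_or_eq_two i with rfl | rfl | rfl <;> reduce_mod_char <;>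
    simp only [coordFn_zero, coordFn_one, coordFn_two, LV] at h1 h2 ⊢
  · exact h1.congr_deriv (by ring)
  · exact h2.congr_deriv (by ring)
  · exact (((hasDerivAt_const t 1).sub h1).sub h2).congr_deriv (by ring)

theorem continuous_coordFn_comp (i : ZMod 3) : Continuous fun t => coordFn i (X t) :=
  continuous_iff_continuousAt.2 fun t => (hasDerivAt_coordFn hode i t).continuousAt

variable {T : ℝ} (hXT : X T = X 0)
include hXT

theorem integral_coordFn_mul_sub_one (i : ZMod 3) :
    ∫ t in (0:ℝ)..T, coordFn i (X t) * coordFn (i - 1) (X t) =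
      ∫ t in (0:ℝ)..T, coordFn i (X t) * coordFn (i + 1) (X t) := by
  have hx := continuous_coordFn_comp hode
  refine intervalIntegral.integral_eq_of_hasDerivAt_sub
    (fun t => (hasDerivAt_coordFn hode i t).congr_deriv (mul_sub _ _ _))
    ((hx i).mul (hx _)) ((hx i).mul (hx _)) (by rw [hXT])

theorem integral_coordFn_mul_add_one_eq (i j : ZMod 3) :
    ∫ t in (0:ℝ)..T, coordFn i (X t) * coordFn (i + 1) (X t) =
      ∫ t in (0:ℝ)..T, coordFn j (X t) * coordFn (j + 1) (X t) := by
  refine ZMod.apply_eq_of_forall_apply_add_one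
    (f := fun i => ∫ t in (0:ℝ)..T, coordFn i (X t) * coordFn (i + 1) (X t)) (fun i => ?_) i j
  rw [← integral_coordFn_mul_sub_one hode hXT, add_sub_cancel_right]
  simp only [mul_comm]

theorem integral_coordFn_add_one_mul_sq (i : ZMod 3) :
    ∫ t in (0:ℝ)..T, coordFn (i + 1) (X t) * coordFn i (X t) ^ 2 =
      ∫ t in (0:ℝ)..T, coordFn i (X t) * coordFn (i + 1) (X t) ^ 2 := by
  have hx := continuous_coordFn_comp hode
  have hG (t : ℝ) := (hasDerivAt_coordFn hode i t).mul (hasDerivAt_coordFn hode (i + 1) t)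
  simp only [add_sub_cancel_right, ZMod.add_one_add_one_eq_sub_one] at hG
  exact intervalIntegral.integral_eq_of_hasDerivAt_sub (fun t => (hG t).congr_deriv (by ring))
    (by fun_prop) (by fun_prop) (by simp only [Pi.mul_apply, hXT])

theorem avgPair_add_one_swap (i : ZMod 3) : avgPair X T (i + 1) i = avgPair X T i (i + 1) := by
  rw [avgPair, avgPair, integral_coordFn_add_one_mul_sq hode hXT]

variable {z : ℝ} (hlevel : ∀ t, (X t).1 * (X t).2 * (1 - (X t).1 - (X t).2) = z)
include hlevel

theorem two_mul_integral_coordFn_mul_add_one_sq (i : ZMod 3) :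
    2 * ∫ t in (0:ℝ)..T, coordFn i (X t) * coordFn (i + 1) (X t) ^ 2 =
      (∫ t in (0:ℝ)..T, coordFn i (X t) * coordFn (i + 1) (X t)) - z * T := by
  have hx := continuous_coordFn_comp hode
  have hpoint (t : ℝ) : coordFn i (X t) * coordFn (i + 1) (X t) -
      coordFn (i + 1) (X t) * coordFn i (X t) ^ 2 -
      coordFn i (X t) * coordFn (i + 1) (X t) ^ 2 = z := by
    rw [← hlevel t, ← coordFn_mul_mul i, coordFn_sub_one]
    ring
  have hint : ∫ t in (0:ℝ)..T, (coordFn i (X t) * coordFn (i + 1) (X t) -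
      coordFn (i + 1) (X t) * coordFn i (X t) ^ 2 -
      coordFn i (X t) * coordFn (i + 1) (X t) ^ 2) = ∫ _ in (0:ℝ)..T, z :=
    intervalIntegral.integral_congr fun t _ => hpoint t
  have hii {f : ℝ → ℝ} (hf : Continuous f) : IntervalIntegrable f MeasureTheory.volume 0 T :=
    hf.intervalIntegrable 0 T
  rw [intervalIntegral.integral_const,
    intervalIntegral.integral_sub (hii (by fun_prop)) (hii (by fun_prop)),
    intervalIntegral.integral_sub (hii (by fun_prop)) (hii (by fun_prop)),
    integral_coordFn_add_one_mul_sq hode hXT] at hint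
  simp only [sub_zero, smul_eq_mul] at hint
  linarith

theorem avgPair_add_one_eq (i j : ZMod 3) : avgPair X T i (i + 1) = avgPair X T j (j + 1) := by
  have hi := two_mul_integral_coordFn_mul_add_one_sq hode hXT hlevel i
  have hj := two_mul_integral_coordFn_mul_add_one_sq hode hXT hlevel j
  rw [integral_coordFn_mul_add_one_eq hode hXT i j] at hi
  rw [avgPair, avgPair]
  congr 1
  linarith

end Orbit

theorem stmt_15_general (z : ℝ)
    (X : ℝ → ℝ × ℝ) (hode : ∀ t, HasDerivAt X (LV (X t)) t)
    (hlevel : ∀ t, (X t).1 * (X t).2 * (1 - (X t).1 - (X t).2) = z)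
    (T : ℝ) (hper : ∀ t, X (t + T) = X t) :
    (∀ i : ZMod 3, avgPair X T i (i + 1) = avgPair X T i (i - 1)) ∧
    (∀ i j : ZMod 3, avgPair X T i (i + 1) = avgPair X T j (j + 1)) ∧
    (∀ i : ZMod 3, avgPair X T i (i + 1) = avgPair X T (i + 1) (i - 1)) := by
  have hXT : X T = X 0 := by simpa using hper 0
  have hswap := avgPair_add_one_swap hode hXT
  have hconst := avgPair_add_one_eq hode hXT hlevel
  refine ⟨fun i => ?_, hconst, fun i => ?_⟩
  · calc avgPair X T i (i + 1) = avgPair X T (i - 1) (i - 1 + 1) := hconst _ _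
      _ = avgPair X T (i - 1 + 1) (i - 1) := (hswap _).symm
      _ = avgPair X T i (i - 1) := by rw [sub_add_cancel]
  · rw [← ZMod.add_one_add_one_eq_sub_one]
    exact hconst _ _

/-- along the periodic orbit on the level set {x₁x₂x₃ = z},
the averages ⟨x_i x_{i+1}²⟩ and ⟨x_i x_{i-1}²⟩ are all equal, independently of i;
in particular ⟨x_i x_{i+1}²⟩ = ⟨x_i x_{i-1}²⟩ = ⟨x_{i+1} x_{i-1}²⟩. -/
theorem stmt_15 (z : ℝ) (hz : z ∈ Ioo (0:ℝ) (1 / 27))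
    (X : ℝ → ℝ × ℝ) (hode : ∀ t, HasDerivAt X (LV (X t)) t)
    (hlevel : ∀ t, (X t).1 * (X t).2 * (1 - (X t).1 - (X t).2) = z)
    (T : ℝ) (hT : 0 < T) (hper : ∀ t, X (t + T) = X t) :
    (∀ i : ZMod 3, avgPair X T i (i + 1) = avgPair X T i (i - 1)) ∧
    (∀ i j : ZMod 3, avgPair X T i (i + 1) = avgPair X T j (j + 1)) ∧
    (∀ i : ZMod 3, avgPair X T i (i + 1) = avgPair X T (i + 1) (i - 1)) :=
  stmt_15_general z X hode hlevel T hper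
end

section
/- Wendel's limit: for a > 0 and x > 0, Γ(Nx + a)/(N^{a-1} Γ(Nx + 1)) → x^{a-1} as N → ∞; moreover, for fixed x > 0 the sequence N ↦ Γ(Nx+a)/(N^{a-1}Γ(Nx+1)) is increasing in N when a < 1 and non-increasing when a ≥ 1 (the latter monotonicity and limit holding for all x ≥ 0). -/
/-!
Write `φ_a(u) = u^{1-a} Γ(u+a) / Γ(u+1)` (`wendelRatio`); the quotient of the theorem is
`x^{a-1} φ_a(N x)`, so everything is a statement about `φ_a`.

For `0 < a < 1`, log-convexity of `Γ` gives Wendel's inequality `(u/(u+a))^{1-a} ≤ φ_a(u) ≤ 1`,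
hence `φ_a(u) → 1`; the recursion `φ_{a+1}(u) = φ_a(u) (u+a)/u` carries the limit to every `a > 0`.

The recursion `Γ(s+1) = s Γ(s)` also gives `φ_a(u) = f_a(u) φ_a(u+1)` with
`f_a(v) = (v/(v+1))^{1-a} (v+1)/(v+a)` (`wendelFactor`), so `φ_a(u) = ∏_{j ≥ 0} f_a(u+j)`.
Since `(log f_a)'(v) = (1-a) a / (v (v+1) (v+a))`, every factor, and hence `φ_a`, is increasing
for `a < 1` and non-increasing for `a ≥ 1`.
-/

open Filter Real Topology Set

noncomputable def wendelRatio (a u : ℝ) : ℝ := u ^ (1 - a) * (Gamma (u + a) / Gamma (u + 1))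

noncomputable def wendelFactor (a v : ℝ) : ℝ := (v / (v + 1)) ^ (1 - a) * ((v + 1) / (v + a))

section
variable {a u : ℝ}

lemma wendelRatio_pos (ha : 0 < a) (hu : 0 < u) : 0 < wendelRatio a u := by
  have := Gamma_pos_of_pos (by positivity : 0 < u + a)
  have := Gamma_pos_of_pos (by positivity : 0 < u + 1)
  unfold wendelRatio
  positivity

lemma wendelFactor_pos (ha : 0 < a) (hu : 0 < u) : 0 < wendelFactor a u := by
  unfold wendelFactor
  positivity

lemma wendelRatio_eq_wendelFactor_mul (ha : 0 < a) (hu : 0 < u) :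
    wendelRatio a u = wendelFactor a u * wendelRatio a (u + 1) := by
  have hΓa : Gamma (u + 1 + a) = (u + a) * Gamma (u + a) := by
    rw [add_right_comm, Gamma_add_one (by positivity)]
  have hΓ1 := Gamma_add_one (s := u + 1) (by positivity)
  have := Gamma_pos_of_pos (by positivity : 0 < u + 1)
  have := rpow_pos_of_pos (by positivity : 0 < u + 1) (1 - a)
  rw [wendelRatio, wendelRatio, wendelFactor, hΓa, hΓ1, div_rpow hu.le (by positivity)]
  field_simp

lemma wendelRatio_eq_prod_mul (ha : 0 < a) (hu : 0 < u) (n : ℕ) :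
    wendelRatio a u = (∏ j ∈ Finset.range n, wendelFactor a (u + j)) * wendelRatio a (u + n) := by
  induction n with
  | zero => simp
  | succ n ih =>
    rw [ih, wendelRatio_eq_wendelFactor_mul ha (by positivity), Finset.prod_range_succ]
    push_cast
    rw [mul_assoc, add_assoc]

lemma wendelRatio_le_one (ha : 0 < a) (ha1 : a < 1) (hu : 0 < u) : wendelRatio a u ≤ 1 := by
  have hG := Gamma_mul_add_mul_le_rpow_Gamma_mul_rpow_Gamma hu (by positivity : (0:ℝ) < u + 1)
    (by linarith : 0 < 1 - a) ha (by ring)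
  rw [show (1 - a) * u + a * (u + 1) = u + a by ring] at hG
  have hGu := Gamma_pos_of_pos hu
  have hGu1 := Gamma_pos_of_pos (by positivity : 0 < u + 1)
  rw [wendelRatio, ← mul_div_assoc, div_le_one hGu1]
  calc u ^ (1 - a) * Gamma (u + a)
      ≤ u ^ (1 - a) * (Gamma u ^ (1 - a) * Gamma (u + 1) ^ a) := by gcongr
    _ = (u * Gamma u) ^ (1 - a) * Gamma (u + 1) ^ a := by rw [mul_rpow hu.le hGu.le]; ring
    _ = Gamma (u + 1) ^ (1 - a) * Gamma (u + 1) ^ a := by rw [← Gamma_add_one hu.ne']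
    _ = Gamma (u + 1) := by rw [← rpow_add hGu1]; norm_num

lemma rpow_div_add_le_wendelRatio (ha : 0 < a) (ha1 : a < 1) (hu : 0 < u) :
    (u / (u + a)) ^ (1 - a) ≤ wendelRatio a u := by
  have hua : 0 < u + a := by positivity
  have hG := Gamma_mul_add_mul_le_rpow_Gamma_mul_rpow_Gamma hua
    (by positivity : (0:ℝ) < u + a + 1) ha (by linarith : 0 < 1 - a) (by ring)
  rw [show a * (u + a) + (1 - a) * (u + a + 1) = u + 1 by ring] at hG
  have hGa := Gamma_pos_of_pos hua
  have hΓ1 : Gamma (u + 1) ≤ Gamma (u + a) * (u + a) ^ (1 - a) :=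
    calc Gamma (u + 1) ≤ Gamma (u + a) ^ a * Gamma (u + a + 1) ^ (1 - a) := hG
      _ = (Gamma (u + a) ^ a * Gamma (u + a) ^ (1 - a)) * (u + a) ^ (1 - a) := by
          rw [Gamma_add_one hua.ne', mul_rpow hua.le hGa.le]; ring
      _ = Gamma (u + a) * (u + a) ^ (1 - a) := by rw [← rpow_add hGa]; norm_num
  rw [wendelRatio, div_rpow hu.le hua.le, ← mul_div_assoc,
    div_le_div_iff₀ (rpow_pos_of_pos hua _) (Gamma_pos_of_pos (by positivity))]
  calc u ^ (1 - a) * Gamma (u + 1) ≤ u ^ (1 - a) * (Gamma (u + a) * (u + a) ^ (1 - a)) := by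
        gcongr
    _ = u ^ (1 - a) * Gamma (u + a) * (u + a) ^ (1 - a) := by ring

lemma wendelRatio_one (hu : 0 < u) : wendelRatio 1 u = 1 := by
  simp [wendelRatio, (Gamma_pos_of_pos (by positivity : 0 < u + 1)).ne']

lemma wendelRatio_add_one (ha : 0 < a) (hu : 0 < u) :
    wendelRatio (a + 1) u = wendelRatio a u * ((u + a) / u) := by
  have hΓ : Gamma (u + (a + 1)) = (u + a) * Gamma (u + a) := by
    rw [← add_assoc, Gamma_add_one (by positivity)]
  have hpow : u ^ (1 - (a + 1)) = u ^ (1 - a) / u := by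
    rw [show 1 - (a + 1) = 1 - a - 1 by ring, rpow_sub_one hu.ne']
  rw [wendelRatio, wendelRatio, hΓ, hpow]
  field_simp

lemma tendsto_wendelRatio_atTop_of_le_one (ha : 0 < a) (ha1 : a ≤ 1) :
    Tendsto (wendelRatio a) atTop (𝓝 1) := by
  rcases ha1.lt_or_eq with ha1 | rfl
  · have hbase : Tendsto (fun u : ℝ => (u / (u + a)) ^ (1 - a)) atTop (𝓝 1) := by
      have h : Tendsto (fun u : ℝ => 1 - a / (u + a)) atTop (𝓝 (1 - 0)) :=
        ((tendsto_atTop_add_const_right _ a tendsto_id).const_div_atTop a).const_sub 1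
      have := h.rpow_const (p := 1 - a) (Or.inl (by norm_num))
      rw [sub_zero, one_rpow] at this
      refine this.congr' ?_
      filter_upwards [eventually_gt_atTop 0] with u hu
      congr 1
      field_simp
      ring
    refine tendsto_of_tendsto_of_tendsto_of_le_of_le' hbase tendsto_const_nhds ?_ ?_ <;>
      filter_upwards [eventually_gt_atTop 0] with u hu
    exacts [rpow_div_add_le_wendelRatio ha ha1 hu, wendelRatio_le_one ha ha1 hu]
  · exact tendsto_const_nhds.congr' <| (eventually_gt_atTop 0).mono fun u hu =>
      (wendelRatio_one hu).symm

lemma tendsto_wendelRatio_atTop (ha : 0 < a) : Tendsto (wendelRatio a) atTop (𝓝 1) := by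
  obtain ⟨n, hn⟩ : ∃ n : ℕ, a ≤ n + 1 := ⟨⌈a⌉₊, by linarith [Nat.le_ceil a]⟩
  induction n generalizing a with
  | zero => exact tendsto_wendelRatio_atTop_of_le_one ha (by simpa using hn)
  | succ n ih =>
    rcases le_or_gt a 1 with ha1 | ha1
    · exact tendsto_wendelRatio_atTop_of_le_one ha ha1
    obtain ⟨b, hb, rfl⟩ : ∃ b, 0 < b ∧ a = b + 1 := ⟨a - 1, by linarith, by ring⟩
    have hshift : Tendsto (fun u : ℝ => (u + b) / u) atTop (𝓝 1) := by
      have h : Tendsto (fun u : ℝ => 1 + b * u⁻¹) atTop (𝓝 (1 + b * 0)) :=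
        (tendsto_inv_atTop_zero.const_mul b).const_add 1
      rw [mul_zero, add_zero] at h
      refine h.congr' ((eventually_gt_atTop 0).mono fun u hu => ?_)
      field_simp
    have := (ih hb (by push_cast at hn; linarith)).mul hshift
    rw [one_mul] at this
    refine this.congr' ((eventually_gt_atTop 0).mono fun u hu => ?_)
    exact (wendelRatio_add_one hb hu).symm

lemma tendsto_prod_wendelFactor (ha : 0 < a) (hu : 0 < u) :
    Tendsto (fun n : ℕ => ∏ j ∈ Finset.range n, wendelFactor a (u + j)) atTop
      (𝓝 (wendelRatio a u)) := by
  have htail : Tendsto (fun n : ℕ => wendelRatio a (u + n)) atTop (𝓝 1) :=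
    (tendsto_wendelRatio_atTop ha).comp
      (tendsto_atTop_add_const_left _ u tendsto_natCast_atTop_atTop)
  have h := (tendsto_const_nhds (x := wendelRatio a u)).div htail one_ne_zero
  rw [div_one] at h
  refine h.congr fun n => ?_
  rw [Pi.div_apply, wendelRatio_eq_prod_mul ha hu n, mul_div_cancel_right₀ _
    (wendelRatio_pos ha (by positivity)).ne']

lemma log_wendelFactor (ha : 0 < a) (hu : 0 < u) :
    log (wendelFactor a u) = (1 - a) * (log u - log (u + 1)) + (log (u + 1) - log (u + a)) := by
  rw [wendelFactor, log_mul (by positivity) (by positivity), log_rpow (by positivity),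
    log_div (by positivity) (by positivity), log_div (by positivity) (by positivity)]

lemma hasDerivAt_log_wendelFactor (ha : 0 < a) (hu : 0 < u) :
    HasDerivAt (fun v => log (wendelFactor a v)) ((1 - a) * a / (u * (u + 1) * (u + a))) u := by
  have hlog : ∀ c, 0 < u + c → HasDerivAt (fun v => log (v + c)) (u + c)⁻¹ u := fun c hc =>
    ((hasDerivAt_id u).add_const c).log hc.ne' |>.congr_deriv (one_div _)
  have h := (((hasDerivAt_log hu.ne').sub (hlog 1 (by positivity))).const_mul (1 - a)).add
    ((hlog 1 (by positivity)).sub (hlog a (by positivity)))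
  refine (h.congr_of_eventuallyEq ?_).congr_deriv ?_
  · filter_upwards [Ioi_mem_nhds hu] with v hv
    exact log_wendelFactor ha hv
  · field_simp
    ring

lemma wendelFactor_strictMonoOn (ha : 0 < a) (ha1 : a < 1) :
    StrictMonoOn (wendelFactor a) (Ioi 0) := by
  have hlog : StrictMonoOn (fun v => log (wendelFactor a v)) (Ioi 0) :=
    strictMonoOn_of_hasDerivWithinAt_pos (convex_Ioi 0)
      (fun v hv => (hasDerivAt_log_wendelFactor ha hv).continuousAt.continuousWithinAt)
      (fun v hv => (hasDerivAt_log_wendelFactor ha (interior_subset hv)).hasDerivWithinAt)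
      (fun v hv => by
        rw [interior_Ioi] at hv
        have : 0 < 1 - a := by linarith
        have : (0 : ℝ) < v := hv
        positivity)
  exact fun s hs t ht hst =>
    (log_lt_log_iff (wendelFactor_pos ha hs) (wendelFactor_pos ha ht)).1 (hlog hs ht hst)

lemma wendelFactor_antitoneOn (ha1 : 1 ≤ a) : AntitoneOn (wendelFactor a) (Ioi 0) := by
  have ha : 0 < a := by linarith
  have hlog : AntitoneOn (fun v => log (wendelFactor a v)) (Ioi 0) :=
    antitoneOn_of_hasDerivWithinAt_nonpos (convex_Ioi 0)
      (fun v hv => (hasDerivAt_log_wendelFactor ha hv).continuousAt.continuousWithinAt)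
      (fun v hv => (hasDerivAt_log_wendelFactor ha (interior_subset hv)).hasDerivWithinAt)
      (fun v hv => by
        rw [interior_Ioi] at hv
        have : (0 : ℝ) < v := hv
        exact div_nonpos_of_nonpos_of_nonneg
          (mul_nonpos_of_nonpos_of_nonneg (by linarith) ha.le) (by positivity))
  exact fun s hs t ht hst =>
    (log_le_log_iff (wendelFactor_pos ha ht) (wendelFactor_pos ha hs)).1 (hlog hs ht hst)

lemma wendelRatio_monotoneOn (ha : 0 < a) (ha1 : a < 1) : MonotoneOn (wendelRatio a) (Ioi 0) := by
  intro s (hs : 0 < s) t (ht : 0 < t) hst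
  refine le_of_tendsto_of_tendsto' (tendsto_prod_wendelFactor ha hs)
    (tendsto_prod_wendelFactor ha ht) fun n => Finset.prod_le_prod (fun j _ => ?_) fun j _ => ?_
  · exact (wendelFactor_pos ha (by positivity)).le
  · exact (wendelFactor_strictMonoOn ha ha1).monotoneOn (mem_Ioi.2 (by positivity))
      (mem_Ioi.2 (by positivity)) (by linarith)

lemma wendelRatio_strictMonoOn (ha : 0 < a) (ha1 : a < 1) :
    StrictMonoOn (wendelRatio a) (Ioi 0) := by
  intro s (hs : 0 < s) t (ht : 0 < t) hst
  rw [wendelRatio_eq_wendelFactor_mul ha hs, wendelRatio_eq_wendelFactor_mul ha ht]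
  exact mul_lt_mul (wendelFactor_strictMonoOn ha ha1 hs ht hst)
    (wendelRatio_monotoneOn ha ha1 (mem_Ioi.2 (by positivity)) (mem_Ioi.2 (by positivity))
      (by linarith))
    (wendelRatio_pos ha (by positivity)) (wendelFactor_pos ha ht).le

lemma wendelRatio_antitoneOn (ha1 : 1 ≤ a) : AntitoneOn (wendelRatio a) (Ioi 0) := by
  intro s (hs : 0 < s) t (ht : 0 < t) hst
  have ha : 0 < a := by linarith
  refine le_of_tendsto_of_tendsto' (tendsto_prod_wendelFactor ha ht)
    (tendsto_prod_wendelFactor ha hs) fun n => Finset.prod_le_prod (fun j _ => ?_) fun j _ => ?_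
  · exact (wendelFactor_pos ha (by positivity)).le
  · exact wendelFactor_antitoneOn ha1 (mem_Ioi.2 (by positivity)) (mem_Ioi.2 (by positivity))
      (by linarith)

end

noncomputable def gammaQuotient (a x M : ℝ) : ℝ :=
  Gamma (M * x + a) / (M ^ (a - 1) * Gamma (M * x + 1))

section
variable {a x : ℝ}

lemma gammaQuotient_eq (hx : 0 < x) {M : ℝ} (hM : 0 < M) :
    gammaQuotient a x M = x ^ (a - 1) * wendelRatio a (M * x) := by
  have hxx : x ^ (a - 1) * x ^ (1 - a) = 1 := by rw [← rpow_add hx]; norm_num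
  have hMM : M ^ (a - 1) * M ^ (1 - a) = 1 := by rw [← rpow_add hM]; norm_num
  have := Gamma_pos_of_pos (by positivity : 0 < M * x + 1)
  have := rpow_pos_of_pos hM (a - 1)
  rw [gammaQuotient, wendelRatio, mul_rpow hM.le hx.le]
  field_simp
  linear_combination (-Gamma (M * x + a) * (M ^ (a - 1) * M ^ (1 - a))) * hxx
    - Gamma (M * x + a) * hMM

lemma gammaQuotient_zero (M : ℝ) : gammaQuotient a 0 M = Gamma a / M ^ (a - 1) := by
  simp [gammaQuotient]

lemma gammaQuotient_strictMonoOn (ha : 0 < a) (ha1 : a < 1) (hx : 0 < x) :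
    StrictMonoOn (gammaQuotient a x) (Ioi 0) := by
  intro M hM N hN hMN
  rw [gammaQuotient_eq hx hM, gammaQuotient_eq hx hN]
  exact mul_lt_mul_of_pos_left (wendelRatio_strictMonoOn ha ha1 (mul_pos hM hx) (mul_pos hN hx)
    (mul_lt_mul_of_pos_right hMN hx)) (rpow_pos_of_pos hx _)

lemma gammaQuotient_antitoneOn (ha1 : 1 ≤ a) (hx : 0 ≤ x) :
    AntitoneOn (gammaQuotient a x) (Ioi 0) := by
  intro M hM N hN hMN
  rcases hx.eq_or_lt with rfl | hx
  · rw [gammaQuotient_zero, gammaQuotient_zero]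
    exact div_le_div_of_nonneg_left (Gamma_pos_of_pos (by linarith)).le
      (rpow_pos_of_pos hM _) (rpow_le_rpow (le_of_lt hM) hMN (by linarith))
  · rw [gammaQuotient_eq hx hM, gammaQuotient_eq hx hN]
    exact mul_le_mul_of_nonneg_left (wendelRatio_antitoneOn ha1 (mul_pos hM hx) (mul_pos hN hx)
      (mul_le_mul_of_nonneg_right hMN hx.le)) (rpow_nonneg hx.le _)

lemma tendsto_gammaQuotient (ha : 0 < a) (hx : 0 < x) :
    Tendsto (gammaQuotient a x) atTop (𝓝 (x ^ (a - 1))) := by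
  have h := ((tendsto_wendelRatio_atTop ha).comp (tendsto_id.atTop_mul_const hx)).const_mul
    (x ^ (a - 1))
  rw [mul_one] at h
  exact h.congr' ((eventually_gt_atTop 0).mono fun M hM => (gammaQuotient_eq hx hM).symm)

lemma tendsto_gammaQuotient_of_one_le (ha1 : 1 ≤ a) (hx : 0 ≤ x) :
    Tendsto (gammaQuotient a x) atTop (𝓝 (x ^ (a - 1))) := by
  rcases hx.eq_or_lt with rfl | hx
  · rw [funext gammaQuotient_zero]
    rcases ha1.eq_or_lt with rfl | ha1
    · simp
    · rw [zero_rpow (by linarith)]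
      exact tendsto_const_nhds.div_atTop (tendsto_rpow_atTop (by linarith))
  · exact tendsto_gammaQuotient (by linarith) hx

end

/-- Wendel's limit Γ(Nx+a)/(N^{a-1}Γ(Nx+1)) → x^{a-1} as N → ∞
(for x > 0, and also for x ≥ 0 when a ≥ 1), together with the monotonicity in N:
increasing when a < 1 (x > 0), non-increasing when a ≥ 1 (x ≥ 0). -/
theorem stmt_17 (a : ℝ) (ha : 0 < a) :
    (∀ x : ℝ, 0 < x →
      Tendsto (fun N : ℕ => Real.Gamma (N * x + a) / ((N : ℝ) ^ (a - 1) * Real.Gamma (N * x + 1)))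
        atTop (nhds (x ^ (a - 1)))) ∧
    (a < 1 → ∀ x : ℝ, 0 < x →
      StrictMono (fun n : ℕ =>
        Real.Gamma ((n + 1) * x + a) / (((n : ℝ) + 1) ^ (a - 1) * Real.Gamma ((n + 1) * x + 1)))) ∧
    (1 ≤ a → ∀ x : ℝ, 0 ≤ x →
      Antitone (fun n : ℕ =>
        Real.Gamma ((n + 1) * x + a) / (((n : ℝ) + 1) ^ (a - 1) * Real.Gamma ((n + 1) * x + 1))) ∧
      Tendsto (fun n : ℕ =>
        Real.Gamma ((n + 1) * x + a) / (((n : ℝ) + 1) ^ (a - 1) * Real.Gamma ((n + 1) * x + 1)))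
        atTop (nhds (x ^ (a - 1)))) := by
  have hsucc : Tendsto (fun n : ℕ => (n : ℝ) + 1) atTop atTop :=
    tendsto_atTop_add_const_right _ 1 tendsto_natCast_atTop_atTop
  have hpos (n : ℕ) : (n : ℝ) + 1 ∈ Ioi 0 := mem_Ioi.2 n.cast_add_one_pos
  refine ⟨fun x hx => (tendsto_gammaQuotient ha hx).comp tendsto_natCast_atTop_atTop,
    fun ha1 x hx m n hmn => ?_, fun ha1 x hx => ⟨fun m n hmn => ?_,
      (tendsto_gammaQuotient_of_one_le ha1 hx).comp hsucc⟩⟩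
  · exact gammaQuotient_strictMonoOn ha ha1 hx (hpos m) (hpos n) (by simpa using hmn)
  · exact gammaQuotient_antitoneOn ha1 hx (hpos m) (hpos n) (by simpa using hmn)
end

section
/- Feller boundary classification near z = 1/27: with scale density p'(z) = -1/(z^a A(z)) and speed density s'(z) = z^{a-1}T(z)/3, using A(z) ~ -2π√3(1/27 - z) and T(1/27^-) = 2π√3, one has for any r ∈ (0,1/27): ∫_r^{1/27} s(z) dp(z) = +∞ while ∫_r^{1/27} p(z) ds(z) < +∞; hence the boundary point z = 1/27 is an entrance boundary for every a ≥ 0. -/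
open Set Real Filter MeasureTheory Topology

/-! Near `z = 1/27` the scale density behaves like `L / (1/27 - z)` with `L = 27^a / (2π√3)`,
while the speed density has a finite positive limit. So `s · p'` is bounded below by a multiple
of `1 / (1/27 - z)` and is not integrable, whereas `p` grows only logarithmically, and a logarithm
times a bounded function is integrable. -/

lemma monotoneOn_Ico_of_hasDerivAt_nonneg {f f' : ℝ → ℝ} {b c : ℝ}
    (hf : ∀ x ∈ Ico b c, HasDerivAt f (f' x) x) (hf' : ∀ x ∈ Ioo b c, 0 ≤ f' x) :
    MonotoneOn f (Ico b c) :=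
  monotoneOn_of_hasDerivWithinAt_nonneg (convex_Ico b c)
    (fun x hx => (hf x hx).continuousAt.continuousWithinAt)
    (fun x hx => (hf x (Ioo_subset_Ico_self (by simpa using hx))).hasDerivWithinAt)
    (fun x hx => hf' x (by simpa using hx))

lemma aestronglyMeasurable_of_hasDerivAt {f f' : ℝ → ℝ} {U : Set ℝ} (hU : MeasurableSet U)
    (hf : ∀ x ∈ U, HasDerivAt f (f' x) x) : AEStronglyMeasurable f' (volume.restrict U) :=
  (measurable_deriv f).aestronglyMeasurable.congr
    (ae_restrict_of_forall_mem hU fun x hx => (hf x hx).deriv)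

section LogarithmicSingularity

variable {f f' : ℝ → ℝ} {b c C : ℝ}

lemma le_add_mul_log_of_sub_mul_deriv_le (hf : ∀ x ∈ Ico b c, HasDerivAt f (f' x) x)
    (hle : ∀ x ∈ Ioo b c, (c - x) * f' x ≤ C) {x : ℝ} (hx : x ∈ Ico b c) :
    f x ≤ f b + C * (log (c - b) - log (c - x)) := by
  have hmono : MonotoneOn (fun y => -(C * log (c - y)) - f y) (Ico b c) := by
    refine monotoneOn_Ico_of_hasDerivAt_nonneg (f' := fun y => C / (c - y) - f' y)
      (fun y hy => ?_) (fun y hy => ?_)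
    · have hcy : c - y ≠ 0 := sub_ne_zero.2 hy.2.ne'
      exact (((((hasDerivAt_id y).const_sub c).log hcy).const_mul C).neg.sub
        (hf y hy)).congr_deriv (by simp only [id]; ring)
    · rw [sub_nonneg, le_div_iff₀ (sub_pos.2 hy.2), mul_comm]
      exact hle y hy
  have := hmono ⟨le_rfl, hx.1.trans_lt hx.2⟩ hx hx.1
  simp only at this
  linarith

lemma integrableOn_Ioo_of_sub_mul_deriv_le (hf : ∀ x ∈ Ico b c, HasDerivAt f (f' x) x)
    (hle : ∀ x ∈ Ioo b c, (c - x) * f' x ≤ C) (hf₀ : ∀ x ∈ Ioo b c, 0 ≤ f x) :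
    IntegrableOn f (Ioo b c) := by
  rcases le_or_gt c b with hcb | hbc
  · simp [Ioo_eq_empty_of_le hcb]
  have hlog : IntegrableOn (fun x => log (c - x)) (Ioo b c) := by
    have := (intervalIntegral.intervalIntegrable_log' (a := 0) (b := c - b)).comp_sub_left c
    rw [sub_zero, sub_sub_cancel] at this
    exact (intervalIntegrable_iff_integrableOn_Ioo_of_le hbc.le).1 this.symm
  refine Integrable.mono' ((integrableOn_const (C := f b + C * log (c - b)) (by simp)).sub
      (hlog.const_mul C)) ?_ (ae_restrict_of_forall_mem measurableSet_Ioo fun x hx => ?_)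
  · exact ContinuousOn.aestronglyMeasurable (fun x hx =>
      (hf x (Ioo_subset_Ico_self hx)).continuousAt.continuousWithinAt) measurableSet_Ioo
  · rw [Real.norm_of_nonneg (hf₀ x hx)]
    have := le_add_mul_log_of_sub_mul_deriv_le hf hle (Ioo_subset_Ico_self hx)
    simp only [Pi.sub_apply]
    linarith

lemma not_integrableOn_Ioo_of_le_sub_mul {ε : ℝ} (hε : 0 < ε) (hbc : b < c)
    (hle : ∀ x ∈ Ioo b c, ε ≤ (c - x) * f x) : ¬ IntegrableOn f (Ioo b c) := by
  intro hf
  have hinv : IntegrableOn (fun x => (x - c)⁻¹) (Ioo b c) := by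
    refine Integrable.mono' (hf.const_mul ε⁻¹) (by fun_prop)
      (ae_restrict_of_forall_mem measurableSet_Ioo fun x hx => ?_)
    have hcx : 0 < c - x := sub_pos.2 hx.2
    rw [norm_inv, Real.norm_eq_abs, abs_sub_comm, abs_of_pos hcx, inv_le_iff_one_le_mul₀ hcx,
      mul_right_comm, mul_assoc]
    exact (one_le_inv_mul₀ hε).2 (hle x hx)
  rcases intervalIntegrable_sub_inv_iff.1
    ((intervalIntegrable_iff_integrableOn_Ioo_of_le hbc.le).2 hinv) with h | h
  · exact hbc.ne h
  · exact h right_mem_uIcc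

end LogarithmicSingularity

lemma not_intervalIntegrable_mul_of_eventually_le {g h : ℝ → ℝ} {r c ε : ℝ} (hrc : r < c)
    (hg : MonotoneOn g (Ico r c)) (hg₀ : 0 < g r) (hε : 0 < ε)
    (hh : ∀ᶠ z in 𝓝[<] c, ε ≤ (c - z) * h z) :
    ¬ IntervalIntegrable (fun z => g z * h z) volume r c := by
  obtain ⟨b, ⟨hrb, hbc⟩, hb⟩ := (mem_nhdsLT_iff_exists_mem_Ico_Ioo_subset hrc).1 hh
  intro hint
  refine not_integrableOn_Ioo_of_le_sub_mul (mul_pos hg₀ hε) hbc (fun x hx => ?_)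
    (((intervalIntegrable_iff_integrableOn_Ioo_of_le hrc.le).1 hint).mono_set
      (Ioo_subset_Ioo_left hrb))
  have hgx : g r ≤ g x :=
    hg (left_mem_Ico.2 hrc) ⟨hrb.trans hx.1.le, hx.2⟩ (hrb.trans hx.1.le)
  calc g r * ε ≤ g x * ((c - x) * h x) := mul_le_mul hgx (hb hx) hε.le (hg₀.trans_le hgx).le
    _ = (c - x) * (g x * h x) := by ring

lemma intervalIntegrable_mul_of_eventually_le {f f' g G : ℝ → ℝ} {r c C M : ℝ} (hrc : r < c)
    (hf : ∀ x ∈ Ico r c, HasDerivAt f (f' x) x) (hf₀ : ∀ x ∈ Ioo r c, 0 ≤ f x)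
    (hf' : ∀ᶠ z in 𝓝[<] c, (c - z) * f' z ≤ C)
    (hG : ∀ x ∈ Ico r c, HasDerivAt G (g x) x) (hg₀ : ∀ x ∈ Ioo r c, 0 ≤ g x)
    (hg : ∀ᶠ z in 𝓝[<] c, g z ≤ M) :
    IntervalIntegrable (fun z => f z * g z) volume r c := by
  obtain ⟨b, ⟨hrb, hbc⟩, hb⟩ := (mem_nhdsLT_iff_exists_mem_Ico_Ioo_subset hrc).1 (hf'.and hg)
  have hnear : Ioo b c ⊆ Ioo r c := Ioo_subset_Ioo_left hrb
  have hfar : Icc r b ⊆ Ico r c := Icc_subset_Ico_right hbc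
  have near : IntegrableOn (fun z => f z * g z) (Ioo b c) := by
    refine (integrableOn_Ioo_of_sub_mul_deriv_le
      (fun x hx => hf x (Ico_subset_Ico_left hrb hx)) (fun x hx => (hb hx).1)
      (fun x hx => hf₀ x (hnear hx))).mul_bdd (c := M)
      (aestronglyMeasurable_of_hasDerivAt measurableSet_Ioo fun x hx =>
        hG x (Ioo_subset_Ico_self (hnear hx)))
      (ae_restrict_of_forall_mem measurableSet_Ioo fun x hx => ?_)
    rw [Real.norm_of_nonneg (hg₀ x (hnear hx))]
    exact (hb hx).2
  have far : IntegrableOn (fun z => f z * g z) (Icc r b) := by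
    refine IntegrableOn.continuousOn_mul
      (fun x hx => (hf x (hfar hx)).continuousAt.continuousWithinAt) ?_ isCompact_Icc
    exact (integrableOn_Icc_iff_integrableOn_Ioc).2 (intervalIntegral.integrableOn_deriv_of_nonneg
      (fun x hx => (hG x (hfar hx)).continuousAt.continuousWithinAt)
      (fun x hx => hG x (hfar (Ioo_subset_Icc_self hx)))
      (fun x hx => hg₀ x ⟨hx.1, hx.2.trans hbc⟩))
  rw [intervalIntegrable_iff_integrableOn_Ioo_of_le hrc.le]
  refine (far.union near).mono_set fun x hx => ?_
  rcases le_or_gt x b with hxb | hbx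
  · exact Or.inl ⟨hx.1.le, hxb⟩
  · exact Or.inr ⟨hbx, hx.2⟩

lemma tendsto_sub_mul_neg_one_div_rpow_mul {A : ℝ → ℝ} {a c k : ℝ} (hc : 0 < c) (hk : k ≠ 0)
    (hA : Tendsto (fun z => A z / (-k * (c - z))) (𝓝[<] c) (𝓝 1)) :
    Tendsto (fun z => (c - z) * -(1 / (z ^ a * A z))) (𝓝[<] c) (𝓝 (c ^ a * k)⁻¹) := by
  have hlim : Tendsto (fun z => (z ^ a * (A z / (-k * (c - z))) * k)⁻¹) (𝓝[<] c)
      (𝓝 (c ^ a * k)⁻¹) := by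
    simpa using ((((continuousAt_rpow_const c a (Or.inl hc.ne')).tendsto.mono_left
      nhdsWithin_le_nhds).mul hA).mul_const k).inv₀ (by positivity)
  refine hlim.congr' (eventually_nhdsWithin_of_forall fun z hz => ?_)
  have hcz : c - z ≠ 0 := sub_ne_zero.2 (ne_of_gt hz)
  field_simp

theorem stmt_19_general (a : ℝ) (T A p s : ℝ → ℝ)
    (hTpos : ∀ z ∈ Ioo (0:ℝ) (1 / 27), 0 < T z)
    (hTlim : Tendsto T (nhdsWithin (1 / 27) (Iio (1 / 27))) (nhds (2 * π * Real.sqrt 3)))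
    (hAasym : Tendsto (fun z => A z / (-(2 * π * Real.sqrt 3) * (1 / 27 - z)))
      (nhdsWithin (1 / 27) (Iio (1 / 27))) (nhds 1))
    (hp : ∀ z ∈ Ioo (0:ℝ) (1 / 27), HasDerivAt p (-(1 / (z ^ a * A z))) z)
    (hppos : ∀ z ∈ Ioo (0:ℝ) (1 / 27), 0 < p z)
    (hs : ∀ z ∈ Ioo (0:ℝ) (1 / 27), HasDerivAt s (z ^ (a - 1) * T z / 3) z)
    (hspos : ∀ z ∈ Ioo (0:ℝ) (1 / 27), 0 < s z)
    (r : ℝ) (hr : r ∈ Ioo (0:ℝ) (1 / 27)) :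
    ¬ IntervalIntegrable (fun z => s z * (-(1 / (z ^ a * A z)))) volume r (1 / 27) ∧
    IntervalIntegrable (fun z => p z * (z ^ (a - 1) * T z / 3)) volume r (1 / 27) := by
  have hk : 0 < 2 * π * √3 := by positivity
  have hsub : Ico r (1 / 27) ⊆ Ioo 0 (1 / 27) := Ico_subset_Ioo_left hr.1
  have hscale := tendsto_sub_mul_neg_one_div_rpow_mul (a := a) (by norm_num) hk.ne' hAasym
  have hL : 0 < ((1 / 27 : ℝ) ^ a * (2 * π * √3))⁻¹ := by positivity
  have hspeed : ∀ z ∈ Ioo (0:ℝ) (1 / 27), 0 < z ^ (a - 1) * T z / 3 := fun z hz => by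
    have := rpow_pos_of_pos hz.1 (a - 1)
    have := hTpos z hz
    positivity
  have hspeed_lim : Tendsto (fun z => z ^ (a - 1) * T z / 3) (𝓝[<] (1 / 27))
      (𝓝 ((1 / 27) ^ (a - 1) * (2 * π * √3) / 3)) :=
    (((continuousAt_rpow_const _ _ (Or.inl (by norm_num))).tendsto.mono_left
      nhdsWithin_le_nhds).mul hTlim).div_const 3
  constructor
  · exact not_intervalIntegrable_mul_of_eventually_le hr.2
      (monotoneOn_Ico_of_hasDerivAt_nonneg (fun x hx => hs x (hsub hx))
        fun x hx => (hspeed x (hsub (Ioo_subset_Ico_self hx))).le)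
      (hspos r hr) (half_pos hL) (hscale.eventually_const_le (half_lt_self hL))
  · exact intervalIntegrable_mul_of_eventually_le hr.2 (fun x hx => hp x (hsub hx))
      (fun x hx => (hppos x (hsub (Ioo_subset_Ico_self hx))).le)
      (hscale.eventually_le_const (lt_add_one _)) (fun x hx => hs x (hsub hx))
      (fun x hx => (hspeed x (hsub (Ioo_subset_Ico_self hx))).le)
      (hspeed_lim.eventually_le_const (lt_add_one _))

/-- Feller boundary classification near z = 1/27: with scale density
p' = -1/(z^a A(z)) and speed density s' = z^{a-1}T(z)/3, using A(z) ~ -2π√3(1/27-z)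
and T(1/27⁻) = 2π√3, for any r ∈ (0,1/27) the integral ∫_r^{1/27} s dp diverges
while ∫_r^{1/27} p ds is finite — hence z = 1/27 is an entrance boundary for all a ≥ 0. -/
theorem stmt_19 (a : ℝ) (ha : 0 ≤ a) (T A p s : ℝ → ℝ)
    (hTpos : ∀ z ∈ Ioo (0:ℝ) (1 / 27), 0 < T z)
    (hAneg : ∀ z ∈ Ioo (0:ℝ) (1 / 27), A z < 0)
    (hAT : ∀ z ∈ Ioo (0:ℝ) (1 / 27), HasDerivAt A (T z) z)
    (hTlim : Tendsto T (nhdsWithin (1 / 27) (Iio (1 / 27))) (nhds (2 * π * Real.sqrt 3)))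
    (hAasym : Tendsto (fun z => A z / (-(2 * π * Real.sqrt 3) * (1 / 27 - z)))
      (nhdsWithin (1 / 27) (Iio (1 / 27))) (nhds 1))
    (hp : ∀ z ∈ Ioo (0:ℝ) (1 / 27), HasDerivAt p (-(1 / (z ^ a * A z))) z)
    (hppos : ∀ z ∈ Ioo (0:ℝ) (1 / 27), 0 < p z)
    (hs : ∀ z ∈ Ioo (0:ℝ) (1 / 27), HasDerivAt s (z ^ (a - 1) * T z / 3) z)
    (hspos : ∀ z ∈ Ioo (0:ℝ) (1 / 27), 0 < s z)
    (r : ℝ) (hr : r ∈ Ioo (0:ℝ) (1 / 27)) :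
    ¬ IntervalIntegrable (fun z => s z * (-(1 / (z ^ a * A z)))) volume r (1 / 27) ∧
    IntervalIntegrable (fun z => p z * (z ^ (a - 1) * T z / 3)) volume r (1 / 27) :=
  stmt_19_general a T A p s hTpos hTlim hAasym hp hppos hs hspos r hr
end
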